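/- (Correctness of the fuel-based transitive closure computation: the deterministic transitive lookup fully captures the transitive closure of a qualifier, as claimed in Section 3.4 of 'Complete the Cycle') For every typing environment Γ, qualifier q, and variable y: y ∈ qtrans_Γ(q) if and only if y ∈ q or there exists x ∈ q with Γ ⊢ x ↝* y. -/
import Mathlib


/-- Variables are natural numbers (a fixed type with decidable equality). -/
abbrev Var := ℕ

/-- A qualifier is a finite set of variables. -/
abbrev Qual := Finset Var

/-- A typing environment is a finite list of bindings of a variable to a qualifier. -/
abbrev Env := List (Var × Qual)

/-- Cardinality of a qualifier `q` w.r.t. `Γ`: counts the bindings of `Γ`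
whose bound variable lies in `q`. -/
def card (Γ : Env) (q : Qual) : ℕ :=
  match Γ with
  | [] => 0
  | (x, _) :: Γ' => if x ∈ q then 1 + card Γ' q else card Γ' q

/-- One-step reachability: `Γ ⊢ x ↝ y` iff some binding `(x, p) ∈ Γ` has `y ∈ p`. -/
def reaches (Γ : Env) (x y : Var) : Prop :=
  ∃ p : Qual, (x, p) ∈ Γ ∧ y ∈ p

/-- Transitive reachability `Γ ⊢ x ↝* y`: the transitive closure of `reaches`. -/
inductive reachesStar (Γ : Env) : Var → Var → Prop
  | base {x y : Var} : reaches Γ x y → reachesStar Γ x y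
  | step {x z y : Var} : reaches Γ x z → reachesStar Γ z y → reachesStar Γ x y

/-- One-step expansion: `step_Γ(q) = q ∪ ⋃_{x ∈ q} { y | Γ ⊢ x ↝ y }`. -/
def stepQ (Γ : Env) (q : Qual) : Qual :=
  q ∪ Γ.toFinset.biUnion (fun b => if b.1 ∈ q then b.2 else ∅)

/-- Fuel-indexed transitive lookup. -/
def qtransN (Γ : Env) : ℕ → Qual → Qual
  | 0, q => q
  | n + 1, q => qtransN Γ n (stepQ Γ q)

/-- Full transitive lookup: iterate `|Γ|` times. -/
def qtrans (Γ : Env) (q : Qual) : Qual := qtransN Γ Γ.length q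

/-- Propositional saturation: `⋃_{x ∈ q} { y | Γ ⊢ x ↝* y } ⊆ q`. -/
def psat (Γ : Env) (q : Qual) : Prop :=
  ∀ x ∈ q, ∀ y : Var, reachesStar Γ x y → y ∈ q

lemma mem_stepQ {Γ : Env} {q : Qual} {y : Var} :
    y ∈ stepQ Γ q ↔ y ∈ q ∨ ∃ x ∈ q, reaches Γ x y := by
  simp only [stepQ, Finset.mem_union, Finset.mem_biUnion, List.mem_toFinset]
  constructor
  · rintro (h | ⟨⟨x, p⟩, hb, hy⟩)
    · exact Or.inl h
    · by_cases hx : x ∈ q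
      · simp only [hx, if_true] at hy
        exact Or.inr ⟨x, hx, p, hb, hy⟩
      · simp [hx] at hy
  · rintro (h | ⟨x, hx, p, hb, hy⟩)
    · exact Or.inl h
    · exact Or.inr ⟨(x, p), hb, by simp [hx, hy]⟩

lemma subset_stepQ (Γ : Env) (q : Qual) : q ⊆ stepQ Γ q :=
  Finset.subset_union_left

lemma card_le_length (Γ : Env) (q : Qual) : card Γ q ≤ Γ.length := by
  induction Γ with
  | nil => simp [card]
  | cons b Γ' ih =>
    obtain ⟨x, p⟩ := b
    by_cases hx : x ∈ q <;> simp [card, hx] <;> omega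

lemma card_mono {Γ : Env} {q q' : Qual} (h : q ⊆ q') : card Γ q ≤ card Γ q' := by
  induction Γ with
  | nil => simp [card]
  | cons b Γ' ih =>
    obtain ⟨x, p⟩ := b
    by_cases hx : x ∈ q
    · simp [card, hx, h hx]; omega
    · by_cases hx' : x ∈ q' <;> simp [card, hx, hx'] <;> omega

lemma card_lt {Γ : Env} {q q' : Qual} (h : q ⊆ q')
    {x : Var} {p : Qual} (hb : (x, p) ∈ Γ) (hx' : x ∈ q') (hx : x ∉ q) :
    card Γ q < card Γ q' := by
  induction Γ with
  | nil => simp at hb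
  | cons b Γ' ih =>
    obtain ⟨a, r⟩ := b
    rcases List.mem_cons.1 hb with heq | htail
    · obtain ⟨rfl, rfl⟩ := Prod.mk.injEq .. ▸ heq
      have := card_mono (Γ := Γ') h
      simp [card, hx, hx']; omega
    · have := ih htail
      by_cases ha : a ∈ q
      · simp [card, ha, h ha]; omega
      · by_cases ha' : a ∈ q' <;> simp [card, ha, ha'] <;> omega

lemma bind_mem_of_card_le {Γ : Env} {q q' : Qual} (h : q ⊆ q')
    (hc : card Γ q' ≤ card Γ q) {x : Var} {p : Qual}
    (hb : (x, p) ∈ Γ) (hx' : x ∈ q') : x ∈ q := by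
  by_contra hx
  exact absurd hc (not_le.2 (card_lt h hb hx' hx))

lemma stepQ_stepQ_of_card {Γ : Env} {q : Qual}
    (hc : card Γ (stepQ Γ q) ≤ card Γ q) :
    stepQ Γ (stepQ Γ q) = stepQ Γ q := by
  apply Finset.Subset.antisymm _ (subset_stepQ _ _)
  intro y hy
  rcases mem_stepQ.1 hy with h | ⟨x, hx, p, hb, hyp⟩
  · exact h
  · have hxq : x ∈ q := bind_mem_of_card_le (subset_stepQ Γ q) hc hb hx
    exact mem_stepQ.2 (Or.inr ⟨x, hxq, p, hb, hyp⟩)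

lemma card_zero_no_bind {Γ : Env} {q : Qual} (hc : card Γ q = 0)
    {x : Var} {p : Qual} (hb : (x, p) ∈ Γ) : x ∉ q := by
  induction Γ with
  | nil => simp at hb
  | cons b Γ' ih =>
    obtain ⟨a, r⟩ := b
    rcases List.mem_cons.1 hb with heq | htail
    · obtain ⟨rfl, rfl⟩ := Prod.mk.injEq .. ▸ heq
      intro hx
      simp [card, hx] at hc
    · by_cases ha : a ∈ q
      · simp [card, ha] at hc
      · simp [card, ha] at hc
        exact ih hc htail

lemma stepQ_of_card_zero {Γ : Env} {q : Qual} (hc : card Γ q = 0) :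
    stepQ Γ q = q := by
  apply Finset.Subset.antisymm _ (subset_stepQ _ _)
  intro y hy
  rcases mem_stepQ.1 hy with h | ⟨x, hx, p, hb, hyp⟩
  · exact h
  · exact absurd hx (card_zero_no_bind hc hb)

lemma qtransN_fixed {Γ : Env} {q : Qual} (h : stepQ Γ q = q) :
    ∀ n, qtransN Γ n q = q := by
  intro n
  induction n with
  | zero => rfl
  | succ n ih => simp [qtransN, h, ih]

lemma qtransN_saturated (Γ : Env) :
    ∀ n q, Γ.length ≤ n + card Γ q →
      stepQ Γ (qtransN Γ (n + 1) q) = qtransN Γ (n + 1) q := by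
  intro n
  induction n with
  | zero =>
    intro q h
    have h1 : card Γ (stepQ Γ q) ≤ card Γ q := by
      have := card_le_length Γ (stepQ Γ q); omega
    show stepQ Γ (qtransN Γ 0 (stepQ Γ q)) = qtransN Γ 0 (stepQ Γ q)
    simpa [qtransN] using stepQ_stepQ_of_card h1
  | succ n ih =>
    intro q h
    show stepQ Γ (qtransN Γ (n + 1) (stepQ Γ q)) = qtransN Γ (n + 1) (stepQ Γ q)
    by_cases hc : card Γ (stepQ Γ q) ≤ card Γ q
    · have hfix := stepQ_stepQ_of_card hc
      have : qtransN Γ (n + 1) (stepQ Γ q) = stepQ Γ q := by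
        show qtransN Γ n (stepQ Γ (stepQ Γ q)) = stepQ Γ q
        rw [hfix, qtransN_fixed hfix]
      rw [this, hfix]
    · exact ih (stepQ Γ q) (by omega)

lemma qtrans_saturated (Γ : Env) (q : Qual) :
    stepQ Γ (qtrans Γ q) = qtrans Γ q := by
  unfold qtrans
  cases hL : Γ.length with
  | zero =>
    have : Γ = [] := List.length_eq_zero_iff.1 hL
    subst this
    simp [qtransN, stepQ]
  | succ m =>
    by_cases hc : card Γ q = 0
    · have hfix := stepQ_of_card_zero hc
      rw [qtransN_fixed hfix, hfix]
    · exact qtransN_saturated Γ m q (by omega)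

lemma subset_qtransN (Γ : Env) : ∀ n (q : Qual), q ⊆ qtransN Γ n q := by
  intro n
  induction n with
  | zero => intro q; exact Finset.Subset.refl q
  | succ n ih =>
    intro q
    exact (subset_stepQ Γ q).trans (ih (stepQ Γ q))

lemma psat_of_fixed {Γ : Env} {s : Qual} (h : stepQ Γ s = s) : psat Γ s := by
  intro x hx y hstar
  induction hstar with
  | base hr =>
    rename_i x' y'
    have : y' ∈ stepQ Γ s := mem_stepQ.2 (Or.inr ⟨x', hx, hr⟩)
    rwa [h] at this
  | step hr _ ih =>
    rename_i x' z' y' _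
    have hz : z' ∈ s := by
      have : z' ∈ stepQ Γ s := mem_stepQ.2 (Or.inr ⟨x', hx, hr⟩)
      rwa [h] at this
    exact ih hz

lemma qtransN_sound (Γ : Env) :
    ∀ n (q : Qual) (y : Var), y ∈ qtransN Γ n q →
      y ∈ q ∨ ∃ x ∈ q, reachesStar Γ x y := by
  intro n
  induction n with
  | zero => intro q y hy; exact Or.inl hy
  | succ n ih =>
    intro q y hy
    rcases ih (stepQ Γ q) y hy with h | ⟨x, hx, hstar⟩
    · rcases mem_stepQ.1 h with h | ⟨x, hx, hr⟩
      · exact Or.inl h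
      · exact Or.inr ⟨x, hx, reachesStar.base hr⟩
    · rcases mem_stepQ.1 hx with h | ⟨x', hx', hr⟩
      · exact Or.inr ⟨x, h, hstar⟩
      · exact Or.inr ⟨x', hx', reachesStar.step hr hstar⟩

/-- Correctness of the fuel-based transitive closure computation. -/
theorem qtrans_correct (Γ : Env) (q : Qual) (y : Var) :
    y ∈ qtrans Γ q ↔ y ∈ q ∨ ∃ x ∈ q, reachesStar Γ x y := by
  constructor
  · exact qtransN_sound Γ Γ.length q y
  · rintro (hy | ⟨x, hx, hstar⟩)
    · exact subset_qtransN Γ Γ.length q hy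
    · exact psat_of_fixed (qtrans_saturated Γ q) x (subset_qtransN Γ Γ.length q hx) y hstar
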